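/- For every j ≥ 0 one has (D_{j+1} − D_j) + (d_{j+1} − d_j) = p − 2, i.e., S_j + s_j = p−2 where S_j = D_{j+1} − D_j and s_j = d_{j+1} − d_j. -/

import Mathlib

open MeasureTheory
open scoped NNReal ENNReal

namespace Chacon

/-- The space of digit sequences with digits in `{0, …, p-1}`. -/
def Gamma (p : ℕ) : Set (ℕ → ℕ) := {x | ∀ i, x i < p}

/-- `Γ*`: sequences with digits `< p` having infinitely many coordinates `≠ p - 1`. -/
def GammaStar (p : ℕ) : Set (ℕ → ℕ) :=
  {x | (∀ i, x i < p) ∧ {i | x i ≠ p - 1}.Infinite}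

/-- The least index `i` with `x i ≠ p - 1`. -/
noncomputable def firstNot (p : ℕ) (x : ℕ → ℕ) : ℕ :=
  sInf {i | x i ≠ p - 1}

/-- `φ(x) = x_i` where `i` is the least index with `x_i ≠ p - 1`. -/
noncomputable def phi (p : ℕ) (x : ℕ → ℕ) : ℕ :=
  x (firstNot p x)

/-- The odometer `S` (addition of `1` with carry): the initial run of digits
`p - 1` is replaced by zeros, and the first digit `≠ p - 1` is increased by one. -/
noncomputable def odo (p : ℕ) (x : ℕ → ℕ) : ℕ → ℕ :=
  fun i =>
    if i < firstNot p x then 0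
    else if i = firstNot p x then x i + 1
    else x i

/-- `φ^(m)(x) = ∑_{j=0}^{m-1} φ(S^j x)`. -/
noncomputable def phiSum (p m : ℕ) (x : ℕ → ℕ) : ℕ :=
  ∑ j ∈ Finset.range m, phi p ((odo p)^[j] x)

/-- The base-`p` digit sequence of a real number `u`. -/
noncomputable def digitsOf (p : ℕ) (u : ℝ) : ℕ → ℕ :=
  fun i => (⌊u * (p : ℝ) ^ (i + 1)⌋).toNat % p

/-- `λ`: the product probability measure on digit sequences under which the
coordinates are i.i.d., uniformly distributed in `{0, …, p-1}`; it is realized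
concretely as the distribution of the base-`p` digit sequence of a uniformly
distributed random point of `[0,1)`. -/
noncomputable def lam (p : ℕ) : Measure (ℕ → ℕ) :=
  Measure.map (digitsOf p) (volume.restrict (Set.Ico (0 : ℝ) 1))

/-- `π_m(j) = λ({x : φ^(m)(x) = j})`. -/
noncomputable def pim (p m j : ℕ) : ℝ≥0∞ :=
  lam p {x | phiSum p m x = j}

/-- `P_m^p(t) = ∑_{j ≥ 0} π_m(j) t^j`, a real polynomial
(the sum is over `0 ≤ j ≤ m (p-2)` since `0 ≤ φ^(m) ≤ m (p-2)` a.s.). -/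
noncomputable def P (p m : ℕ) (t : ℝ) : ℝ :=
  ∑ j ∈ Finset.range (m * (p - 2) + 1), (pim p m j).toReal * t ^ j

/-- The `n`-th triangular number `Δ_n = n (n+1) / 2`. -/
def tri (n : ℕ) : ℕ := n * (n + 1) / 2

/-- The degree `D_m` of `P_m^p`: the largest `j` with `π_m(j) ≠ 0`. -/
noncomputable def D (p m : ℕ) : ℕ := sSup {j | pim p m j ≠ 0}

/-- The lower degree `d_m` of `P_m^p`: the least `j` with `π_m(j) ≠ 0`. -/
noncomputable def d (p m : ℕ) : ℕ := sInf {j | pim p m j ≠ 0}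

/-!
Write `digit p n` for the base-`p` expansion of `n`. On these sequences the odometer is
`n ↦ n + 1`, so `φ^(m)(digit p n) = ∑_{j<m} φ(digit p (n + j))`. Both `φ` and `S` only look at
the digits up to the first one `≠ p - 1`, hence every `x ∈ Γ*` has `φ^(m)(x) = φ^(m)(digit p n)`
for the integer `n` formed by a long enough prefix of `x`, while each such prefix is a cylinder of
positive measure. So the support of `π_m` is `{φ^(m)(digit p n) | n ∈ ℕ}`.

If `n + n' + 2 = p^N` then `φ(digit p n) + φ(digit p n') = p - 2`. Reversing the orbit
`n' = p^N - n - m - 1` therefore shows that the support is symmetric under `v ↦ m (p - 2) - v`,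
whence `D_m + d_m = m (p - 2)`. As `φ ≥ 0`, both `D_m` and `d_m` are nondecreasing in `m`, and
subtracting the identities for `m = j` and `m = j + 1` gives the theorem.
-/

/-- The base-`p` digit sequence of `n`, least significant digit first, so that `odo p`
acts on it as `n ↦ n + 1`. -/
def digit (p n : ℕ) : ℕ → ℕ := fun i => n / p ^ i % p

section

variable {p : ℕ}

section Shift

variable {x : ℕ → ℕ}

lemma firstNot_eq_zero (h : x 0 ≠ p - 1) : firstNot p x = 0 :=
  Nat.sInf_eq_zero.mpr (Or.inl h)

lemma firstNot_eq_succ (h : x 0 = p - 1) (hx : ∃ i, x i ≠ p - 1) :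
    firstNot p x = firstNot p (fun i => x (i + 1)) + 1 := by
  have hpos : 1 ≤ firstNot p x := Nat.one_le_iff_ne_zero.mpr fun h0 => by
    have := Nat.sInf_mem (s := {i | x i ≠ p - 1}) hx
    exact this (by rw [← firstNot, h0, h])
  exact (Nat.sInf_add (p := fun i => x i ≠ p - 1) hpos).symm

lemma phi_of_ne (h : x 0 ≠ p - 1) : phi p x = x 0 := by
  rw [phi, firstNot_eq_zero h]

lemma phi_of_eq (h : x 0 = p - 1) (hx : ∃ i, x i ≠ p - 1) :
    phi p x = phi p (fun i => x (i + 1)) := by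
  rw [phi, phi, firstNot_eq_succ h hx]

lemma odo_of_ne (h : x 0 ≠ p - 1) : odo p x = Function.update x 0 (x 0 + 1) := by
  ext i
  rcases i with _ | i <;> simp [odo, firstNot_eq_zero h]

lemma odo_zero_of_eq (h : x 0 = p - 1) (hx : ∃ i, x i ≠ p - 1) : odo p x 0 = 0 := by
  simp [odo, firstNot_eq_succ h hx]

lemma odo_succ_of_eq (h : x 0 = p - 1) (hx : ∃ i, x i ≠ p - 1) (i : ℕ) :
    odo p x (i + 1) = odo p (fun i => x (i + 1)) i := by
  simp [odo, firstNot_eq_succ h hx]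

lemma phiSum_succ' (m : ℕ) (x : ℕ → ℕ) :
    phiSum p (m + 1) x = phi p x + phiSum p m (odo p x) := by
  simp only [phiSum, Finset.sum_range_succ', Function.iterate_succ_apply,
    Function.iterate_zero_apply, add_comm]

end Shift

@[simp] lemma digit_zero (n : ℕ) : digit p n 0 = n % p := by simp [digit]

lemma digit_succ (n i : ℕ) : digit p n (i + 1) = digit p (n / p) i := by
  simp only [digit, pow_succ', Nat.div_div_eq_div_mul]

lemma digit_shift (n : ℕ) : (fun i => digit p n (i + 1)) = digit p (n / p) :=
  funext (digit_succ n)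

lemma exists_digit_ne (hp : 2 ≤ p) (n : ℕ) : ∃ i, digit p n i ≠ p - 1 :=
  ⟨n, by simp [digit, Nat.div_eq_of_lt (Nat.lt_pow_self hp)]; omega⟩

lemma odo_digit (hp : 2 ≤ p) (n : ℕ) : odo p (digit p n) = digit p (n + 1) := by
  induction n using Nat.strong_induction_on with
  | _ n ih =>
  have hmod := Nat.mod_add_div n p
  have hlt := Nat.mod_lt n (show 0 < p by omega)
  by_cases h : n % p = p - 1
  · have hsucc : (n + 1) / p = n / p + 1 ∧ (n + 1) % p = 0 :=
      (Nat.div_mod_unique (by omega)).mpr ⟨by rw [mul_add]; omega, by omega⟩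
    have hdig : digit p n 0 = p - 1 := by simpa using h
    have hn : n / p < n := Nat.div_lt_self (by omega) (by omega)
    ext i
    rcases i with _ | i
    · simp [odo_zero_of_eq hdig (exists_digit_ne hp n), hsucc.2]
    · rw [odo_succ_of_eq hdig (exists_digit_ne hp n), digit_shift, ih _ hn,
        ← hsucc.1, ← digit_shift]
  · have hsucc : (n + 1) / p = n / p ∧ (n + 1) % p = n % p + 1 :=
      (Nat.div_mod_unique (by omega)).mpr ⟨by omega, by omega⟩
    rw [odo_of_ne (by simpa using h)]
    ext i
    rcases i with _ | i
    · simp [hsucc.2]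
    · rw [Function.update_of_ne (by omega), digit_succ, digit_succ, hsucc.1]

lemma iterate_odo_digit (hp : 2 ≤ p) (n j : ℕ) : (odo p)^[j] (digit p n) = digit p (n + j) := by
  induction j with
  | zero => rfl
  | succ j ih => rw [Function.iterate_succ_apply', ih, odo_digit hp, add_assoc]

lemma phiSum_digit (hp : 2 ≤ p) (m n : ℕ) :
    phiSum p m (digit p n) = ∑ j ∈ Finset.range m, phi p (digit p (n + j)) := by
  simp only [phiSum, iterate_odo_digit hp]

lemma phi_digit_add_phi_digit (hp : 2 ≤ p) (N : ℕ) :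
    ∀ n n', n + n' + 2 = p ^ N → phi p (digit p n) + phi p (digit p n') = p - 2 := by
  induction N with
  | zero => intro n n' h; simp at h
  | succ N ih =>
  intro n n' h
  have hn := Nat.mod_add_div n p
  have hn' := Nat.mod_add_div n' p
  have hr := Nat.mod_lt n (show 0 < p by omega)
  have hr' := Nat.mod_lt n' (show 0 < p by omega)
  set s := n % p + n' % p + 2 with hs
  have hsum : s + p * (n / p + n' / p) = p * p ^ N := by
    rw [← pow_succ', ← h]; linarith
  have hsp : s % p = 0 := by
    rw [← Nat.add_mul_mod_self_left s p (n / p + n' / p), hsum, Nat.mul_mod_right]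
  obtain ⟨t, hst⟩ : p ∣ s := Nat.dvd_of_mod_eq_zero hsp
  have hq : n / p + n' / p + t = p ^ N :=
    Nat.eq_of_mul_eq_mul_left (show 0 < p by omega) (by linarith)
  have ht : t ≤ 2 := Nat.le_of_mul_le_mul_left (show p * t ≤ p * 2 by omega) (by omega)
  -- `t = 1`: neither last digit is `p - 1` and they add up to `p - 2`;
  -- `t = 2`: both are `p - 1`, and `φ` is read off `n / p` and `n' / p`.
  interval_cases t
  · omega
  · rw [phi_of_ne (by simp; omega), phi_of_ne (by simp; omega)]
    simp only [digit_zero]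
    omega
  · rw [phi_of_eq (by simp; omega) (exists_digit_ne hp n),
      phi_of_eq (by simp; omega) (exists_digit_ne hp n'), digit_shift, digit_shift]
    exact ih _ _ (by omega)

lemma phiSum_digit_add_phiSum_digit (hp : 2 ≤ p) {m n n' N : ℕ}
    (h : n + n' + m + 1 = p ^ N) :
    phiSum p m (digit p n) + phiSum p m (digit p n') = m * (p - 2) := by
  rw [phiSum_digit hp, phiSum_digit hp, ← Finset.sum_range_reflect, ← Finset.sum_add_distrib,
    Finset.sum_congr rfl fun j hj => phi_digit_add_phi_digit hp N _ _ ?_]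
  · simp
  · have := Finset.mem_range.mp hj
    omega

section Locality

variable {N : ℕ} {x y : ℕ → ℕ}

lemma firstNot_eq_of_eqOn (hxy : ∀ i < N, x i = y i) (hx : ∃ i < N, x i ≠ p - 1) :
    firstNot p x = firstNot p y ∧ firstNot p x < N := by
  obtain ⟨i, hiN, hi⟩ := hx
  have hxK : x (firstNot p x) ≠ p - 1 := Nat.sInf_mem (s := {i | x i ≠ p - 1}) ⟨i, hi⟩
  have hKN : firstNot p x < N := (Nat.sInf_le hi).trans_lt hiN
  have hyK : y (firstNot p x) ≠ p - 1 := hxy _ hKN ▸ hxK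
  have hle : firstNot p y ≤ firstNot p x := Nat.sInf_le hyK
  have hyL : y (firstNot p y) ≠ p - 1 := Nat.sInf_mem (s := {i | y i ≠ p - 1}) ⟨_, hyK⟩
  have hxL : x (firstNot p y) ≠ p - 1 := by rwa [hxy _ (hle.trans_lt hKN)]
  have hge : firstNot p x ≤ firstNot p y := Nat.sInf_le hxL
  exact ⟨le_antisymm hge hle, hKN⟩

lemma phi_eq_and_odo_eqOn (hxy : ∀ i < N, x i = y i) (hx : ∃ i < N, x i ≠ p - 1) :
    phi p x = phi p y ∧ ∀ i < N, odo p x i = odo p y i := by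
  obtain ⟨hK, hKN⟩ := firstNot_eq_of_eqOn hxy hx
  refine ⟨by rw [phi, phi, ← hK, hxy _ hKN], fun i hi => ?_⟩
  simp only [odo, ← hK, hxy i hi]

lemma exists_digit_ne_of_lt :
    ∀ {n}, n + 1 < p ^ N → ∃ i < N, digit p n i ≠ p - 1 := by
  induction N with
  | zero => intro n h; simp at h
  | succ N ih =>
  intro n h
  by_cases h0 : n % p = p - 1
  · have hq : n / p + 1 < p ^ N := by
      have := Nat.mod_add_div n p
      refine Nat.lt_of_mul_lt_mul_left (a := p) ?_
      rw [pow_succ'] at h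
      rw [mul_add]
      omega
    obtain ⟨i, hiN, hi⟩ := ih hq
    exact ⟨i + 1, by omega, by rwa [digit_succ]⟩
  · exact ⟨0, by omega, by simpa using h0⟩

lemma phiSum_eq_of_eqOn_digit (hp : 2 ≤ p) (m : ℕ) :
    ∀ {n x}, (∀ i < N, x i = digit p n i) → n + m < p ^ N →
      phiSum p m x = phiSum p m (digit p n) := by
  induction m with
  | zero => simp [phiSum]
  | succ m ih =>
  intro n x hx hnm
  obtain ⟨i, hiN, hi⟩ := exists_digit_ne_of_lt (show n + 1 < p ^ N by omega)
  obtain ⟨hphi, hodo⟩ := phi_eq_and_odo_eqOn hx ⟨i, hiN, hx i hiN ▸ hi⟩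
  rw [odo_digit hp] at hodo
  rw [phiSum_succ', phiSum_succ', hphi, ih hodo (by omega), ← odo_digit hp]

end Locality

lemma sum_range_succ_mul_pow (N : ℕ) (e : ℕ → ℕ) :
    ∑ k ∈ Finset.range (N + 1), e k * p ^ k =
      e 0 + p * ∑ k ∈ Finset.range N, e (k + 1) * p ^ k := by
  rw [Finset.sum_range_succ', Finset.mul_sum, add_comm]
  simp only [pow_succ', pow_zero, mul_one, mul_left_comm]

lemma sum_mul_pow_lt (N : ℕ) :
    ∀ {e : ℕ → ℕ}, (∀ i < N, e i < p) → ∑ k ∈ Finset.range N, e k * p ^ k < p ^ N := by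
  induction N with
  | zero => simp
  | succ N ih =>
  intro e he
  have h0 := he 0 (by omega)
  have hS := ih (e := fun k => e (k + 1)) fun i hi => he (i + 1) (by omega)
  rw [sum_range_succ_mul_pow, pow_succ']
  nlinarith

lemma digit_sum_mul_pow (N : ℕ) :
    ∀ {e : ℕ → ℕ}, (∀ i < N, e i < p) →
      ∀ i < N, digit p (∑ k ∈ Finset.range N, e k * p ^ k) i = e i := by
  induction N with
  | zero => simp
  | succ N ih =>
  intro e he i hi
  have h0 := he 0 (by omega)
  rw [sum_range_succ_mul_pow]
  rcases i with _ | i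
  · simp [Nat.mod_eq_of_lt h0]
  · rw [digit_succ, Nat.add_mul_div_left _ _ (by omega), Nat.div_eq_of_lt h0, zero_add]
    exact ih (fun i hi => he (i + 1) (by omega)) i (by omega)

lemma measurable_digitsOf : Measurable (digitsOf p) :=
  measurable_pi_lambda _ fun _ =>
    (measurable_from_top (f := fun z : ℤ => z.toNat % p)).comp (measurable_id.mul_const _).floor

lemma measurableSet_GammaStar : MeasurableSet (GammaStar p) := by
  have h : GammaStar p = (⋂ i, (fun x : ℕ → ℕ => x i) ⁻¹' Set.Iio p) ∩
      ⋂ a, ⋃ b, ⋃ (_ : a < b), (fun x : ℕ → ℕ => x b) ⁻¹' {p - 1}ᶜ := by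
    ext x
    simp [GammaStar, Set.infinite_iff_exists_gt, and_comm]
  rw [h]
  exact (MeasurableSet.iInter fun i => measurable_pi_apply i measurableSet_Iio).inter
    (MeasurableSet.iInter fun a => MeasurableSet.iUnion fun b => MeasurableSet.iUnion fun _ =>
      measurable_pi_apply b (measurableSet_singleton _).compl)

lemma digitsOf_eq_floor (u : ℝ) (i : ℕ) : digitsOf p u i = ⌊u * p ^ (i + 1)⌋₊ % p := by
  rw [digitsOf, Int.floor_toNat]

lemma floor_mul_pow_div_pow (hp : 0 < p) (u : ℝ) {i N : ℕ} (hiN : i ≤ N) :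
    ⌊u * p ^ N⌋₊ / p ^ (N - i) = ⌊u * p ^ i⌋₊ := by
  rw [← Nat.floor_div_natCast, Nat.cast_pow, ← Nat.sub_add_cancel hiN, pow_add,
    Nat.add_sub_cancel, mul_left_comm, mul_div_cancel_left₀ _ (by positivity)]

lemma digitsOf_eq_digit_floor (hp : 0 < p) (u : ℝ) {i N : ℕ} (hi : i < N) :
    digitsOf p u i = digit p ⌊u * p ^ N⌋₊ (N - 1 - i) := by
  rw [digitsOf_eq_floor, digit, show N - 1 - i = N - (i + 1) by omega,
    floor_mul_pow_div_pow hp u hi]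

/-- If the digits of `u` were all `p - 1` from `N` on, then
`⌊u p^(N+k+1)⌋₊ + 1 = p^k (⌊u p^(N+1)⌋₊ + 1)` for all `k`, forcing
`⌊u p^(N+1)⌋₊ + 1 ≤ u p^(N+1)`. -/
lemma digitsOf_mem_GammaStar (hp : 2 ≤ p) {u : ℝ} (hu : 0 ≤ u) : digitsOf p u ∈ GammaStar p := by
  refine ⟨fun i => Nat.mod_lt _ (by omega), fun hfin => ?_⟩
  obtain ⟨N, hN⟩ := hfin.bddAbove
  set a : ℕ → ℕ := fun k => ⌊u * p ^ (k + 1)⌋₊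
  have hstep : ∀ k, a (k + 1) = p * a k + digitsOf p u (k + 1) := fun k => by
    rw [digitsOf_eq_floor]
    show _ = p * ⌊u * (p : ℝ) ^ (k + 1)⌋₊ + _
    rw [← floor_mul_pow_div_pow (by omega) u (Nat.le_add_right (k + 1) 1),
      Nat.add_sub_cancel_left, pow_one, Nat.div_add_mod]
  have hiter : ∀ k, a (N + k) + 1 = p ^ k * (a N + 1) := fun k => by
    induction k with
    | zero => simp
    | succ k ih =>
      have hd : digitsOf p u (N + k + 1) = p - 1 := by
        by_contra h
        exact absurd (hN h) (by omega)
      rw [← add_assoc, hstep, hd, pow_succ', mul_assoc, ← ih]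
      zify [show 1 ≤ p by omega]
      ring
  have hδ : 0 < (a N + 1 : ℝ) - u * p ^ (N + 1) := by
    have := Nat.lt_floor_add_one (u * (p : ℝ) ^ (N + 1))
    linarith
  obtain ⟨k, hk⟩ := pow_unbounded_of_one_lt ((a N + 1 : ℝ) - u * p ^ (N + 1))⁻¹
    (show (1 : ℝ) < p by exact_mod_cast hp)
  have hfloor : (a (N + k) : ℝ) ≤ u * p ^ (N + k + 1) := Nat.floor_le (by positivity)
  have hcast : (a (N + k) : ℝ) + 1 = p ^ k * (a N + 1) := by exact_mod_cast hiter k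
  rw [inv_lt_iff_one_lt_mul₀ hδ] at hk
  have : (u * p ^ (N + k + 1) : ℝ) = p ^ k * (u * p ^ (N + 1)) := by ring
  nlinarith

lemma lam_compl_GammaStar (hp : 2 ≤ p) : lam p (GammaStar p)ᶜ = 0 := by
  rw [lam, Measure.map_apply measurable_digitsOf measurableSet_GammaStar.compl,
    Measure.restrict_apply' measurableSet_Ico]
  refine measure_mono_null (fun u hu => ?_) measure_empty
  exact hu.1 (digitsOf_mem_GammaStar hp hu.2.1)

lemma phiSum_mem_range_of_mem_GammaStar (hp : 2 ≤ p) (m : ℕ) {x : ℕ → ℕ}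
    (hx : x ∈ GammaStar p) : phiSum p m x ∈ Set.range fun n => phiSum p m (digit p n) := by
  obtain ⟨hlt, hinf⟩ := hx
  obtain ⟨i, hi, hmi⟩ := hinf.exists_gt m
  refine ⟨∑ k ∈ Finset.range (i + 1), x k * p ^ k, (phiSum_eq_of_eqOn_digit hp m
    (fun k hk => (digit_sum_mul_pow _ (fun k _ => hlt k) k hk).symm) ?_).symm⟩
  have hlow := sum_mul_pow_lt i (e := x) fun k _ => hlt k
  have hxi : x i + 2 ≤ p := by have := hlt i; have : x i ≠ p - 1 := hi; omega
  have hm : m < p ^ i := hmi.trans (Nat.lt_pow_self hp)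
  rw [Finset.sum_range_succ, pow_succ]
  nlinarith

lemma pim_eq_zero_of_notMem_range (hp : 2 ≤ p) {m j : ℕ}
    (hj : j ∉ Set.range fun n => phiSum p m (digit p n)) : pim p m j = 0 :=
  measure_mono_null (fun _ hx hG => hj (hx ▸ phiSum_mem_range_of_mem_GammaStar hp m hG))
    (lam_compl_GammaStar hp)

lemma lam_ne_zero_of_floor_mul_pow_eq (hp : 2 ≤ p) {s : Set (ℕ → ℕ)} {N c : ℕ}
    (hc : c < p ^ N) (hs : ∀ u : ℝ, 0 ≤ u → ⌊u * p ^ N⌋₊ = c → digitsOf p u ∈ s) :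
    lam p s ≠ 0 := by
  have hpN : (0 : ℝ) < p ^ N := by positivity
  have hsub : Set.Ico (c / p ^ N : ℝ) ((c + 1) / p ^ N) ⊆ digitsOf p ⁻¹' s ∩ Set.Ico 0 1 := by
    intro u ⟨hcu, huc⟩
    rw [div_le_iff₀ hpN] at hcu
    rw [lt_div_iff₀ hpN] at huc
    have hu : 0 ≤ u := nonneg_of_mul_nonneg_left (c.cast_nonneg.trans hcu) hpN
    have hc' : (c + 1 : ℝ) ≤ p ^ N := by exact_mod_cast hc
    refine ⟨hs u hu ((Nat.floor_eq_iff (by positivity)).mpr ⟨hcu, huc⟩), hu, ?_⟩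
    nlinarith
  have hpos : 0 < volume (Set.Ico (c / p ^ N : ℝ) ((c + 1) / p ^ N)) := by
    rw [Real.volume_Ico, ENNReal.ofReal_pos, ← sub_div]
    simp [hpN]
  refine (hpos.trans_le ?_).ne'
  calc volume (Set.Ico (c / p ^ N : ℝ) ((c + 1) / p ^ N))
      ≤ volume (digitsOf p ⁻¹' s ∩ Set.Ico 0 1) := measure_mono hsub
    _ ≤ volume.restrict (Set.Ico 0 1) (digitsOf p ⁻¹' s) := Measure.le_restrict_apply _ _
    _ ≤ lam p s := Measure.le_map_apply measurable_digitsOf.aemeasurable _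

lemma pim_phiSum_digit_ne_zero (hp : 2 ≤ p) (m n : ℕ) :
    pim p m (phiSum p m (digit p n)) ≠ 0 := by
  set N := n + m
  have hN : n + m < p ^ N := Nat.lt_pow_self hp
  -- `digitsOf` reads the most significant digit first, so the first `N` digits of `n` are
  -- those of `u ∈ [c, c + 1) / p ^ N`, where `c` has the digits of `n` in reverse order.
  set c := ∑ k ∈ Finset.range N, digit p n (N - 1 - k) * p ^ k
  have hdig : ∀ k < N, digit p n (N - 1 - k) < p := fun _ _ => Nat.mod_lt _ (by omega)
  refine lam_ne_zero_of_floor_mul_pow_eq hp (sum_mul_pow_lt N hdig) fun u _ hfloor => ?_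
  refine phiSum_eq_of_eqOn_digit hp m (fun i hi => ?_) hN
  rw [digitsOf_eq_digit_floor (by omega) u hi, hfloor, digit_sum_mul_pow N hdig _ (by omega),
    Nat.sub_sub_self (by omega)]

lemma support_pim (hp : 2 ≤ p) (m : ℕ) :
    {j | pim p m j ≠ 0} = Set.range fun n => phiSum p m (digit p n) := by
  ext j
  refine ⟨fun hj => not_not.mp fun h => hj (pim_eq_zero_of_notMem_range hp h), ?_⟩
  rintro ⟨n, rfl⟩
  exact pim_phiSum_digit_ne_zero hp m n

lemma sSup_add_sInf_of_forall_sub_mem {S : Set ℕ} {M : ℕ} (hne : S.Nonempty)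
    (h : ∀ v ∈ S, v ≤ M ∧ M - v ∈ S) : sSup S + sInf S = M := by
  have hbdd : BddAbove S := ⟨M, fun v hv => (h v hv).1⟩
  have hsup := h _ (Nat.sSup_mem hne hbdd)
  have hinf := h _ (Nat.sInf_mem hne)
  have h₁ := Nat.sInf_le hsup.2
  have h₂ := le_csSup hbdd hinf.2
  omega

lemma phiSum_le_phiSum_succ (m : ℕ) (x : ℕ → ℕ) : phiSum p m x ≤ phiSum p (m + 1) x := by
  rw [phiSum, phiSum, Finset.sum_range_succ]
  exact Nat.le_add_right _ _

lemma exists_phiSum_digit_add_eq (hp : 2 ≤ p) (m n : ℕ) :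
    ∃ n', phiSum p m (digit p n) + phiSum p m (digit p n') = m * (p - 2) :=
  have hN : n + m + 1 < p ^ (n + m + 1) := Nat.lt_pow_self hp
  ⟨p ^ (n + m + 1) - n - m - 1, phiSum_digit_add_phiSum_digit hp (N := n + m + 1) (by omega)⟩

lemma phiSum_digit_le (hp : 2 ≤ p) (m n : ℕ) : phiSum p m (digit p n) ≤ m * (p - 2) := by
  obtain ⟨n', h⟩ := exists_phiSum_digit_add_eq hp m n
  omega

lemma D_add_d (hp : 2 ≤ p) (m : ℕ) : D p m + d p m = m * (p - 2) := by
  rw [D, d, support_pim hp]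
  refine sSup_add_sInf_of_forall_sub_mem ⟨_, 0, rfl⟩ (Set.forall_mem_range.mpr fun n => ?_)
  obtain ⟨n', h⟩ := exists_phiSum_digit_add_eq hp m n
  exact ⟨by omega, n', show phiSum p m (digit p n') = _ by omega⟩

lemma D_le_D_succ (hp : 2 ≤ p) (m : ℕ) : D p m ≤ D p (m + 1) := by
  rw [D, D, support_pim hp, support_pim hp, sSup_range, sSup_range]
  exact ciSup_mono ⟨_, Set.forall_mem_range.mpr (phiSum_digit_le hp (m + 1))⟩
    fun _ => phiSum_le_phiSum_succ m _

lemma d_le_d_succ (hp : 2 ≤ p) (m : ℕ) : d p m ≤ d p (m + 1) := by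
  rw [d, d, support_pim hp, support_pim hp, sInf_range, sInf_range]
  exact ciInf_mono (OrderBot.bddBelow _) fun _ => phiSum_le_phiSum_succ m _

end

/-- `S_j + s_j = p - 2` for every `j ≥ 0`, where
`S_j = D_{j+1} - D_j` and `s_j = d_{j+1} - d_j`. -/
theorem statement_18 (p : ℕ) (hp : 3 ≤ p) (j : ℕ) :
    (D p (j + 1) - D p j) + (d p (j + 1) - d p j) = p - 2 := by
  have hp' : 2 ≤ p := by omega
  have h₀ := D_add_d hp' j
  have h₁ := D_add_d hp' (j + 1)
  have hD := D_le_D_succ hp' j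
  have hd := d_le_d_succ hp' j
  rw [add_one_mul] at h₁
  omega

end Chacon
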